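/- arXiv:0711.2710 — 5 statements merged into one kernel-verified Lean document; each statement's English description precedes it below -/
import Mathlib

section
/- Let G = (V, E) be a finite, strongly connected directed network with arc capacities c : E → ℝ and imports b : V → ℝ. Suppose that ∑_{v ∈ V} b(v) = 0 and that c(e) ≥ ∑_{v ∈ V} max(b(v), 0) for every arc e ∈ E. Then there exists a feasible flow on G, i.e., a function f : E → ℝ with 0 ≤ f(e) ≤ c(e) for every arc e and with b(v) + ∑_{(u,v) ∈ E} f(u,v) − ∑_{(v,w) ∈ E} f(v,w) = 0 for every vertex v. -/
/-!
Join every vertex `s` to every vertex `t` by a simple directed path and send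
`b⁺(s) b⁻(t) / S` units along it, where `S = ∑ b⁺ = ∑ b⁻` is the total supply. A simple path
uses each arc at most once, so an arc carries at most `∑ₛₜ b⁺(s) b⁻(t) / S = S ≤ c(e)`; the
paths leaving `v` export `b⁺(v)` and those entering `v` import `b⁻(v)`, which balances `b(v)`.
-/

open Finset

theorem List.exists_isChain_cons_nodup_of_relationReflTransGen {α : Type*} {r : α → α → Prop}
    {a b : α} (h : Relation.ReflTransGen r a b) :
    ∃ l, IsChain r (a :: l) ∧ getLast (a :: l) (cons_ne_nil _ _) = b ∧ (a :: l).Nodup := by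
  induction h using Relation.ReflTransGen.head_induction_on with
  | refl => exact ⟨[], .singleton _, rfl, nodup_singleton _⟩
  | @head a c hac _ ih =>
    obtain ⟨l, hchain, hlast, hnodup⟩ := ih
    by_cases ha : a ∈ c :: l
    · -- `a` already occurs on the chain: cut out the cycle through it
      obtain ⟨l₁, l₂, hsplit⟩ := append_of_mem ha
      have hsuf : (a :: l₂) <:+ (c :: l) := ⟨l₁, hsplit.symm⟩
      refine ⟨l₂, hchain.suffix hsuf, ?_, hnodup.sublist hsuf.sublist⟩
      simp_rw [← hlast, hsplit, getLast_append_of_ne_nil _ (cons_ne_nil _ _)]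
    · exact ⟨c :: l, .cons_cons hac hchain, by rwa [getLast_cons_cons], nodup_cons.2 ⟨ha, hnodup⟩⟩

section
variable {V : Type*} [Fintype V]

def netInflow : (V × V → ℝ) →ₗ[ℝ] V → ℝ where
  toFun g v := ∑ u, g (u, v) - ∑ w, g (v, w)
  map_add' g h := by ext v; simp only [Pi.add_apply, sum_add_distrib]; ring
  map_smul' a g := by
    ext v; simp only [Pi.smul_apply, smul_eq_mul, ← mul_sum, RingHom.id_apply]; ring

theorem netInflow_apply (g : V × V → ℝ) (v : V) :
    netInflow g v = ∑ u, g (u, v) - ∑ w, g (v, w) := rfl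

theorem netInflow_single [DecidableEq V] (s t : V) :
    netInflow (Pi.single (s, t) 1) = Pi.single t 1 - Pi.single s 1 := by
  ext v
  simp [netInflow_apply, Pi.single_apply, Prod.ext_iff, ite_and]

theorem exists_unitFlow_of_isChain [DecidableEq V] (E : Set (V × V)) :
    ∀ (l : List V) (s : V), (s :: l).IsChain (fun a b => (a, b) ∈ E) → (s :: l).Nodup →
    ∃ g : V × V → ℝ, (∀ e, 0 ≤ g e ∧ g e ≤ 1) ∧ (∀ e ∉ E, g e = 0) ∧
      (∀ e, e.1 ∉ s :: l → g e = 0) ∧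
      netInflow g = Pi.single ((s :: l).getLast (List.cons_ne_nil _ _)) 1 - Pi.single s 1
  | [], s, _, _ => ⟨0, by simp, by simp, by simp, by simp⟩
  | c :: l, s, hchain, hnodup => by
    rw [List.isChain_cons_cons] at hchain
    rw [List.nodup_cons] at hnodup
    obtain ⟨g, hg01, hgE, hgsupp, hgflow⟩ :=
      exists_unitFlow_of_isChain E l c hchain.2 hnodup.2
    have hgs : ∀ w, g (s, w) = 0 := fun w => hgsupp _ hnodup.1
    refine ⟨g + Pi.single (s, c) 1, fun e => ?_, fun e he => ?_, fun e he => ?_, ?_⟩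
    · rcases eq_or_ne e (s, c) with rfl | hne
      · simp [hgs]
      · simpa [hne] using hg01 e
    · have hne : e ≠ (s, c) := fun h => he (h ▸ hchain.1)
      simp [hne, hgE e he]
    · have hne : e ≠ (s, c) := by rintro rfl; simp at he
      simp [hne, hgsupp e (fun h => he (List.mem_cons_of_mem _ h))]
    · rw [map_add, hgflow, netInflow_single, List.getLast_cons_cons]
      abel

theorem exists_unitFlow [DecidableEq V] {E : Set (V × V)} {s t : V}
    (h : Relation.ReflTransGen (fun a b => (a, b) ∈ E) s t) :
    ∃ g : V × V → ℝ, (∀ e, 0 ≤ g e ∧ g e ≤ 1) ∧ (∀ e ∉ E, g e = 0) ∧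
      netInflow g = Pi.single t 1 - Pi.single s 1 := by
  obtain ⟨l, hchain, rfl, hnodup⟩ := List.exists_isChain_cons_nodup_of_relationReflTransGen h
  obtain ⟨g, hg01, hgE, -, hgflow⟩ := exists_unitFlow_of_isChain E l s hchain hnodup
  exact ⟨g, hg01, hgE, hgflow⟩

theorem netInflow_sum_sum_smul_apply [DecidableEq V] {g : V → V → V × V → ℝ}
    (hg : ∀ s t, netInflow (g s t) = Pi.single t 1 - Pi.single s 1) (a : V → V → ℝ) (v : V) :
    netInflow (∑ s, ∑ t, a s t • g s t) v = ∑ s, a s v - ∑ t, a v t := by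
  simp [hg, Finset.sum_apply, Pi.single_apply, mul_sub, sum_sub_distrib]

end

theorem mul_sum_div_sum_of_nonneg {ι : Type*} [Fintype ι] {p : ι → ℝ} (hp : ∀ i, 0 ≤ p i)
    (i : ι) : p i * (∑ j, p j) / ∑ j, p j = p i := by
  rcases eq_or_ne (∑ j, p j) 0 with h | h
  · rw [(sum_eq_zero_iff_of_nonneg fun j _ => hp j).1 h i (mem_univ i)]
    simp
  · exact mul_div_cancel_right₀ _ h

theorem exists_coupling {ι : Type*} [Fintype ι] {p q : ι → ℝ} (hp : ∀ i, 0 ≤ p i)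
    (hq : ∀ i, 0 ≤ q i) (h : ∑ i, p i = ∑ i, q i) :
    ∃ a : ι → ι → ℝ, (∀ i j, 0 ≤ a i j) ∧ (∀ i, ∑ j, a i j = p i) ∧ (∀ j, ∑ i, a i j = q j) := by
  refine ⟨fun i j => p i * q j / ∑ k, p k, fun i j => ?_, fun i => ?_, fun j => ?_⟩
  · exact div_nonneg (mul_nonneg (hp i) (hq j)) (sum_nonneg fun k _ => hp k)
  · rw [← sum_div, ← mul_sum, ← h, mul_sum_div_sum_of_nonneg hp]
  · rw [← sum_div, ← sum_mul, mul_comm, h, mul_sum_div_sum_of_nonneg hq]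

open Classical in
theorem stmt_0_general {V : Type*} [Fintype V]
    (E : Set (V × V)) (c : V × V → ℝ) (b : V → ℝ)
    (hconn : ∀ u v : V, Relation.ReflTransGen (fun a b => (a, b) ∈ E) u v)
    (hbsum : ∑ v, b v = 0)
    (hc : ∀ e ∈ E, ∑ v, max (b v) 0 ≤ c e) :
    ∃ f : V × V → ℝ,
      (∀ e ∈ E, 0 ≤ f e ∧ f e ≤ c e) ∧
      ∀ v : V, b v + (∑ u, if (u, v) ∈ E then f (u, v) else 0)
        - (∑ w, if (v, w) ∈ E then f (v, w) else 0) = 0 := by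
  choose g hg01 hgE hgflow using fun s t => exists_unitFlow (hconn s t)
  have hsupply : ∑ v, max (b v) 0 = ∑ v, max (-b v) 0 := by
    rw [← sub_eq_zero, ← sum_sub_distrib]
    simpa only [max_zero_sub_max_neg_zero_eq_self] using hbsum
  obtain ⟨a, ha0, hrow, hcol⟩ :=
    exists_coupling (fun v => le_max_right (b v) 0) (fun v => le_max_right (-b v) 0) hsupply
  set f : V × V → ℝ := ∑ s, ∑ t, a s t • g s t with hf
  have hf_apply : ∀ e, f e = ∑ s, ∑ t, a s t * g s t e := fun e => by simp [hf, Finset.sum_apply]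
  have hfE : ∀ e ∉ E, f e = 0 := fun e he => by simp [hf_apply, hgE _ _ e he]
  have hf_le : ∀ e, f e ≤ ∑ v, max (b v) 0 := fun e => by
    simp_rw [hf_apply, ← hrow]
    exact sum_le_sum fun s _ => sum_le_sum fun t _ =>
      mul_le_of_le_one_right (ha0 s t) (hg01 s t e).2
  have hflow : netInflow f = fun v => -b v := by
    ext v
    rw [hf, netInflow_sum_sum_smul_apply hgflow, hcol, hrow]
    linarith [max_zero_sub_max_neg_zero_eq_self (b v)]
  refine ⟨f, fun e he => ⟨?_, (hf_le e).trans (hc e he)⟩, fun v => ?_⟩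
  · rw [hf_apply]
    exact sum_nonneg fun s _ => sum_nonneg fun t _ => mul_nonneg (ha0 s t) (hg01 s t e).1
  · have hif : ∀ e, (if e ∈ E then f e else 0) = f e := fun e =>
      ite_eq_left_iff.2 fun he => (hfE e he).symm
    simp only [hif]
    linarith [netInflow_apply f v, congrFun hflow v]

open Classical in
/-- In a finite, strongly connected directed network with imports summing to zero
and every arc capacity at least the total supply, a feasible flow exists. -/
theorem stmt_0 {V : Type*} [Fintype V]
    (E : Set (V × V)) (c : V × V → ℝ) (b : V → ℝ)
    (hconn : ∀ u v : V, Relation.ReflTransGen (fun a b => (a, b) ∈ E) u v)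
    (hcap : ∀ e ∈ E, 0 ≤ c e)
    (hbsum : ∑ v, b v = 0)
    (hc : ∀ e ∈ E, ∑ v, max (b v) 0 ≤ c e) :
    ∃ f : V × V → ℝ,
      (∀ e ∈ E, 0 ≤ f e ∧ f e ≤ c e) ∧
      ∀ v : V, b v + (∑ u, if (u, v) ∈ E then f (u, v) else 0)
        - (∑ w, if (v, w) ∈ E then f (v, w) else 0) = 0 :=
  stmt_0_general E c b hconn hbsum hc
end

section
/- Let V be a finite set, b : V → ℝ with ∑_{v ∈ V} b(v) = 0, and r ∈ V. Let T ⊆ V with r ∈ T contain every vertex v with b(v) > 0 and carry an in-tree parent function p_T : T∖{r} → T (iterating p_T from any vertex of T∖{r} reaches r). Let U ⊆ V with r ∈ U contain every vertex v with b(v) < 0 and carry an out-tree parent function p_U : U∖{r} → U (iterating p_U from any vertex of U∖{r} reaches r). Define f : V × V → ℝ by f(v, w) = [v ∈ T∖{r} and w = p_T(v)] · ∑_{u descendant of v in T} max(b(u), 0) + [w ∈ U∖{r} and v = p_U(w)] · ∑_{u descendant of w in U} max(−b(u), 0), and f(v, w) = 0 otherwise. Then f ≥ 0, f(v, w) ≤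 2 · ∑_{u ∈ V} max(b(u), 0) for all (v, w), and for every vertex v ∈ V, b(v) + ∑_{u ∈ V} f(u, v) − ∑_{w ∈ V} f(v, w) = 0. -/
/-- `u` is a descendant of `x` in the tree given by the parent function `p`
rooted at `r`: iterating `p` from `u` reaches `x` (without first leaving the
tree through the root `r`). Every vertex is a descendant of itself. -/
def IsDesc {V : Type*} (p : V → V) (r : V) (u x : V) : Prop :=
  ∃ k : ℕ, p^[k] u = x ∧ ∀ j < k, p^[j] u ≠ r


section Aux
open Classical Finset
variable {V : Type*} [Fintype V] {p : V → V} {r : V} {W : Finset V}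

lemma chain_mem (hp : ∀ u ∈ W, u ≠ r → p u ∈ W) {u : V} (hu : u ∈ W)
    (k : ℕ) (hk : ∀ j < k, p^[j] u ≠ r) : p^[k] u ∈ W := by
  induction k with
  | zero => simpa
  | succ n ih =>
    rw [Function.iterate_succ_apply']
    exact hp _ (ih fun j hj => hk j (by omega)) (hk n (by omega))

lemma uniq_idx (hroot : ∀ u ∈ W, ∃ k, p^[k] u = r) {u : V} (hu : u ∈ W)
    {k1 k2 : ℕ} (hlt : k1 < k2) (heq : p^[k1] u = p^[k2] u)
    (hr2 : ∀ j < k2, p^[j] u ≠ r) : False := by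
  obtain ⟨N, hN, hmin⟩ : ∃ N, p^[N] u = r ∧ ∀ m < N, p^[m] u ≠ r := by
    have h := hroot u hu
    exact ⟨Nat.find h, Nat.find_spec h, fun m hm => Nat.find_min h hm⟩
  have hk2N : k2 ≤ N := by
    by_contra h
    exact hr2 N (by omega) hN
  have key : p^[N - (k2 - k1)] u = r := by
    have h1 : N - (k2 - k1) = (N - k2) + k1 := by omega
    calc p^[N - (k2 - k1)] u = p^[N - k2] (p^[k1] u) := by
          rw [h1, Function.iterate_add_apply]
      _ = p^[N - k2] (p^[k2] u) := by rw [heq]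
      _ = p^[(N - k2) + k2] u := by rw [Function.iterate_add_apply]
      _ = r := by rw [show N - k2 + k2 = N by omega]; exact hN
  exact hmin _ (by omega) key

lemma desc_self (u : V) : IsDesc p r u u :=
  ⟨0, rfl, fun j hj => absurd hj (Nat.not_lt_zero j)⟩

lemma desc_root (hroot : ∀ u ∈ W, ∃ k, p^[k] u = r) {u : V} (hu : u ∈ W) :
    IsDesc p r u r := by
  have h := hroot u hu
  exact ⟨Nat.find h, Nat.find_spec h, fun j hj => Nat.find_min h hj⟩

lemma desc_mem (hp : ∀ u ∈ W, u ≠ r → p u ∈ W) {u x : V} (hu : u ∈ W)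
    (h : IsDesc p r u x) : x ∈ W := by
  obtain ⟨k, hk, hkr⟩ := h
  exact hk ▸ chain_mem hp hu k hkr

lemma point_split (hp : ∀ u ∈ W, u ≠ r → p u ∈ W)
    (hroot : ∀ u ∈ W, ∃ k, p^[k] u = r) (g : V → ℝ) (x u : V) :
    (if u ∈ W ∧ IsDesc p r u x then g u else 0)
    = (if u = x ∧ x ∈ W then g u else 0)
      + ∑ c ∈ univ.filter (fun c => c ∈ W ∧ c ≠ r ∧ p c = x),
          (if u ∈ W ∧ IsDesc p r u c then g u else 0) := by
  by_cases huW : u ∈ W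
  · by_cases hux : u = x
    · subst hux
      have hzero : ∑ c ∈ univ.filter (fun c => c ∈ W ∧ c ≠ r ∧ p c = u),
          (if u ∈ W ∧ IsDesc p r u c then g u else 0) = 0 := by
        apply Finset.sum_eq_zero
        intro c hc
        simp only [mem_filter, mem_univ, true_and] at hc
        obtain ⟨hcW, hcr, hpc⟩ := hc
        rw [if_neg]
        rintro ⟨-, m, hm, hmr⟩
        refine uniq_idx hroot huW (Nat.succ_pos m) ?_ ?_
        · simp only [Function.iterate_zero_apply, Function.iterate_succ_apply', hm, hpc]
        · intro j hj
          rcases Nat.lt_succ_iff_lt_or_eq.mp hj with h | h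
          · exact hmr j h
          · subst h; rw [hm]; exact hcr
      rw [hzero, add_zero, if_pos ⟨huW, desc_self u⟩, if_pos ⟨rfl, huW⟩]
    · by_cases hdesc : IsDesc p r u x
      · obtain ⟨k, hk, hkr⟩ := hdesc
        have hk0 : k ≠ 0 := by rintro rfl; exact hux hk
        set c0 := p^[k - 1] u with hc0
        have hiter : p c0 = x := by
          have h := Function.iterate_succ_apply' p (k - 1) u
          rw [hc0, ← h, show (k - 1).succ = k by omega, hk]
        have hc0W : c0 ∈ W := chain_mem hp huW (k - 1) (fun j hj => hkr j (by omega))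
        have hc0r : c0 ≠ r := hkr (k - 1) (by omega)
        have hsum : ∑ c ∈ univ.filter (fun c => c ∈ W ∧ c ≠ r ∧ p c = x),
            (if u ∈ W ∧ IsDesc p r u c then g u else 0) = g u := by
          rw [Finset.sum_eq_single_of_mem c0 (by simp [hc0W, hc0r, hiter])]
          · rw [if_pos ⟨huW, k - 1, rfl, fun j hj => hkr j (by omega)⟩]
          · intro c hc hne
            simp only [mem_filter, mem_univ, true_and] at hc
            obtain ⟨hcW, hcr, hpc⟩ := hc
            rw [if_neg]
            rintro ⟨-, m, hm, hmr⟩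
            have hm1 : ∀ j < m + 1, p^[j] u ≠ r := by
              intro j hj
              rcases Nat.lt_succ_iff_lt_or_eq.mp hj with h | h
              · exact hmr j h
              · subst h; rw [hm]; exact hcr
            have hpm : p^[m+1] u = x := by
              rw [Function.iterate_succ_apply', hm, hpc]
            have hmk : m + 1 = k := by
              by_contra hne'
              rcases Nat.lt_or_ge (m+1) k with h | h
              · exact uniq_idx hroot huW h (by rw [hpm, hk]) hkr
              · exact uniq_idx hroot huW (by omega : k < m + 1) (by rw [hpm, hk]) hm1
            exact hne (by rw [← hm, hc0, show k - 1 = m by omega])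
        rw [hsum, if_pos ⟨huW, k, hk, hkr⟩, if_neg (by rintro ⟨h, -⟩; exact hux h), zero_add]
      · have hzero : ∑ c ∈ univ.filter (fun c => c ∈ W ∧ c ≠ r ∧ p c = x),
            (if u ∈ W ∧ IsDesc p r u c then g u else 0) = 0 := by
          apply Finset.sum_eq_zero
          intro c hc
          simp only [mem_filter, mem_univ, true_and] at hc
          obtain ⟨hcW, hcr, hpc⟩ := hc
          rw [if_neg]
          rintro ⟨-, m, hm, hmr⟩
          apply hdesc
          refine ⟨m + 1, by rw [Function.iterate_succ_apply', hm, hpc], ?_⟩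
          intro j hj
          rcases Nat.lt_succ_iff_lt_or_eq.mp hj with h | h
          · exact hmr j h
          · subst h; rw [hm]; exact hcr
        rw [hzero, add_zero, if_neg (by rintro ⟨-, h⟩; exact hdesc h),
          if_neg (by rintro ⟨h, -⟩; exact hux h)]
  · rw [if_neg (by rintro ⟨h, -⟩; exact huW h),
      if_neg (by rintro ⟨rfl, h⟩; exact huW h)]
    symm
    rw [zero_add]
    apply Finset.sum_eq_zero
    intro c hc
    rw [if_neg (by rintro ⟨h, -⟩; exact huW h)]

lemma sum_desc_split (hp : ∀ u ∈ W, u ≠ r → p u ∈ W)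
    (hroot : ∀ u ∈ W, ∃ k, p^[k] u = r) (g : V → ℝ) (x : V) :
    ∑ u ∈ univ.filter (fun u => u ∈ W ∧ IsDesc p r u x), g u
    = (if x ∈ W then g x else 0)
      + ∑ c ∈ univ.filter (fun c => c ∈ W ∧ c ≠ r ∧ p c = x),
          ∑ u ∈ univ.filter (fun u => u ∈ W ∧ IsDesc p r u c), g u := by
  have h1 : ∀ c : V, ∑ u ∈ univ.filter (fun u => u ∈ W ∧ IsDesc p r u c), g u
      = ∑ u ∈ univ, (if u ∈ W ∧ IsDesc p r u c then g u else 0) :=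
    fun c => Finset.sum_filter _ _
  have h2 : (if x ∈ W then g x else 0)
      = ∑ u ∈ univ, (if u = x ∧ x ∈ W then g u else 0) := by
    rw [Finset.sum_eq_single_of_mem x (mem_univ x)]
    · by_cases hW : x ∈ W <;> simp [hW]
    · intro c _ hne
      rw [if_neg (by rintro ⟨h, -⟩; exact hne h)]
  rw [Finset.sum_filter, h2]
  simp only [h1]
  rw [Finset.sum_comm, ← Finset.sum_add_distrib]
  exact Finset.sum_congr rfl fun u _ => point_split hp hroot g x u

end Aux

open Classical in
/-- The flow obtained by routing all supplies to the root `r` through the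
in-tree `T` and all demands from the root through the out-tree `U` is
nonnegative, bounded by twice the total supply on every arc, and has zero
balance at every vertex. -/
theorem stmt_2 {V : Type*} [Fintype V]
    (b : V → ℝ) (r : V) (T U : Finset V) (pT pU : V → V) (f : V × V → ℝ)
    (hbsum : ∑ u, b u = 0)
    (hrT : r ∈ T) (hrU : r ∈ U)
    (hTsupp : ∀ u, 0 < b u → u ∈ T)
    (hUdem : ∀ u, b u < 0 → u ∈ U)
    (hpT : ∀ u ∈ T, u ≠ r → pT u ∈ T)
    (hpTroot : ∀ u ∈ T, ∃ k : ℕ, pT^[k] u = r)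
    (hpU : ∀ u ∈ U, u ≠ r → pU u ∈ U)
    (hpUroot : ∀ u ∈ U, ∃ k : ℕ, pU^[k] u = r)
    (hf : ∀ x y : V, f (x, y) =
      (if x ∈ T ∧ x ≠ r ∧ y = pT x then
        ∑ u ∈ Finset.univ.filter (fun u => u ∈ T ∧ IsDesc pT r u x), max (b u) 0
       else 0) +
      (if y ∈ U ∧ y ≠ r ∧ x = pU y then
        ∑ u ∈ Finset.univ.filter (fun u => u ∈ U ∧ IsDesc pU r u y), max (-b u) 0
       else 0)) :
    (∀ x y : V, 0 ≤ f (x, y)) ∧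
    (∀ x y : V, f (x, y) ≤ 2 * ∑ u, max (b u) 0) ∧
    (∀ x : V, b x + (∑ u, f (u, x)) - (∑ w, f (x, w)) = 0) := by
  classical
  have hBnn : (0:ℝ) ≤ ∑ u, max (b u) 0 :=
    Finset.sum_nonneg fun u _ => le_max_right _ _
  have hmaxsub : ∀ a : ℝ, max a 0 - max (-a) 0 = a := fun a => by
    rcases le_total a 0 with h | h
    · rw [max_eq_right h, max_eq_left (by linarith)]; ring
    · rw [max_eq_left h, max_eq_right (by linarith)]; ring
  have hBU : ∑ u, max (-b u) 0 = ∑ u, max (b u) 0 := by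
    have h : ∑ u, (max (b u) 0 - max (-b u) 0) = 0 := by
      simp only [hmaxsub]; exact hbsum
    rw [Finset.sum_sub_distrib] at h
    linarith
  refine ⟨?_, ?_, ?_⟩
  · intro x y
    rw [hf]
    apply add_nonneg
    · split
      · exact Finset.sum_nonneg fun u _ => le_max_right _ _
      · exact le_refl 0
    · split
      · exact Finset.sum_nonneg fun u _ => le_max_right _ _
      · exact le_refl 0
  · intro x y
    rw [hf, two_mul]
    apply add_le_add
    · split
      · exact Finset.sum_le_sum_of_subset_of_nonneg (Finset.filter_subset _ _)
          (fun u _ _ => le_max_right _ _)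
      · exact hBnn
    · split
      · calc ∑ u ∈ Finset.univ.filter (fun u => u ∈ U ∧ IsDesc pU r u y), max (-b u) 0
            ≤ ∑ u, max (-b u) 0 :=
              Finset.sum_le_sum_of_subset_of_nonneg (Finset.filter_subset _ _)
                (fun u _ _ => le_max_right _ _)
          _ = ∑ u, max (b u) 0 := hBU
      · exact hBnn
  · intro x
    -- abbreviations
    have hTsplit := sum_desc_split hpT hpTroot (fun u => max (b u) 0) x
    have hUsplit := sum_desc_split hpU hpUroot (fun u => max (-b u) 0) x
    have hTr : (∑ u ∈ Finset.univ.filter (fun u => u ∈ T ∧ IsDesc pT r u r), max (b u) 0)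
        = ∑ u, max (b u) 0 := by
      rw [Finset.sum_filter]
      apply Finset.sum_congr rfl
      intro u _
      by_cases hu : u ∈ T
      · rw [if_pos ⟨hu, desc_root hpTroot hu⟩]
      · rw [if_neg (by rintro ⟨h, -⟩; exact hu h)]
        have hb : b u ≤ 0 := by
          by_contra h; exact hu (hTsupp u (by linarith))
        rw [max_eq_right hb]
    have hUr : (∑ u ∈ Finset.univ.filter (fun u => u ∈ U ∧ IsDesc pU r u r), max (-b u) 0)
        = ∑ u, max (b u) 0 := by
      rw [Finset.sum_filter, ← hBU]
      apply Finset.sum_congr rfl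
      intro u _
      by_cases hu : u ∈ U
      · rw [if_pos ⟨hu, desc_root hpUroot hu⟩]
      · rw [if_neg (by rintro ⟨h, -⟩; exact hu h)]
        have hb : 0 ≤ b u := by
          by_contra h; exact hu (hUdem u (by linarith))
        rw [max_eq_right (by linarith)]
    have hTzero : x ∉ T →
        (∑ u ∈ Finset.univ.filter (fun u => u ∈ T ∧ IsDesc pT r u x), max (b u) 0) = 0 := by
      intro hx
      apply Finset.sum_eq_zero
      intro u hu
      simp only [Finset.mem_filter, Finset.mem_univ, true_and] at hu
      exact absurd (desc_mem hpT hu.1 hu.2) hx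
    have hUzero : x ∉ U →
        (∑ u ∈ Finset.univ.filter (fun u => u ∈ U ∧ IsDesc pU r u x), max (-b u) 0) = 0 := by
      intro hx
      apply Finset.sum_eq_zero
      intro u hu
      simp only [Finset.mem_filter, Finset.mem_univ, true_and] at hu
      exact absurd (desc_mem hpU hu.1 hu.2) hx
    -- inflow
    have hin : ∑ u, f (u, x)
        = (∑ c ∈ Finset.univ.filter (fun c => c ∈ T ∧ c ≠ r ∧ pT c = x),
            ∑ u ∈ Finset.univ.filter (fun u => u ∈ T ∧ IsDesc pT r u c), max (b u) 0)
          + (if x ∈ U ∧ x ≠ r then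
              ∑ u ∈ Finset.univ.filter (fun u => u ∈ U ∧ IsDesc pU r u x), max (-b u) 0
             else 0) := by
      simp only [hf]
      rw [Finset.sum_add_distrib]
      congr 1
      · rw [Finset.sum_filter]
        apply Finset.sum_congr rfl
        intro u _
        exact if_congr (by constructor <;> rintro ⟨a, b, c⟩ <;> exact ⟨a, b, c.symm⟩) rfl rfl
      · have e2 : ∀ u : V,
            (if x ∈ U ∧ x ≠ r ∧ u = pU x then
              ∑ u ∈ Finset.univ.filter (fun u => u ∈ U ∧ IsDesc pU r u x), max (-b u) 0
             else 0)
            = (if u = pU x then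
                (if x ∈ U ∧ x ≠ r then
                  ∑ u ∈ Finset.univ.filter (fun u => u ∈ U ∧ IsDesc pU r u x), max (-b u) 0
                 else 0) else 0) := by
          intro u
          by_cases h1 : u = pU x
          · subst h1
            by_cases h2 : x ∈ U ∧ x ≠ r
            · rw [if_pos ⟨h2.1, h2.2, rfl⟩, if_pos rfl, if_pos h2]
            · rw [if_neg (by rintro ⟨a, b, -⟩; exact h2 ⟨a, b⟩), if_pos rfl, if_neg h2]
          · rw [if_neg (by rintro ⟨-, -, c⟩; exact h1 c), if_neg h1]
        simp only [e2]
        rw [Finset.sum_ite_eq' Finset.univ (pU x), if_pos (Finset.mem_univ _)]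
    -- outflow
    have hout : ∑ w, f (x, w)
        = (if x ∈ T ∧ x ≠ r then
            ∑ u ∈ Finset.univ.filter (fun u => u ∈ T ∧ IsDesc pT r u x), max (b u) 0
           else 0)
          + (∑ c ∈ Finset.univ.filter (fun c => c ∈ U ∧ c ≠ r ∧ pU c = x),
              ∑ u ∈ Finset.univ.filter (fun u => u ∈ U ∧ IsDesc pU r u c), max (-b u) 0) := by
      simp only [hf]
      rw [Finset.sum_add_distrib]
      congr 1
      · have e2 : ∀ w : V,
            (if x ∈ T ∧ x ≠ r ∧ w = pT x then
              ∑ u ∈ Finset.univ.filter (fun u => u ∈ T ∧ IsDesc pT r u x), max (b u) 0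
             else 0)
            = (if w = pT x then
                (if x ∈ T ∧ x ≠ r then
                  ∑ u ∈ Finset.univ.filter (fun u => u ∈ T ∧ IsDesc pT r u x), max (b u) 0
                 else 0) else 0) := by
          intro w
          by_cases h1 : w = pT x
          · subst h1
            by_cases h2 : x ∈ T ∧ x ≠ r
            · rw [if_pos ⟨h2.1, h2.2, rfl⟩, if_pos rfl, if_pos h2]
            · rw [if_neg (by rintro ⟨a, b, -⟩; exact h2 ⟨a, b⟩), if_pos rfl, if_neg h2]
          · rw [if_neg (by rintro ⟨-, -, c⟩; exact h1 c), if_neg h1]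
        simp only [e2]
        rw [Finset.sum_ite_eq' Finset.univ (pT x), if_pos (Finset.mem_univ _)]
      · rw [Finset.sum_filter]
        apply Finset.sum_congr rfl
        intro w _
        exact if_congr (by constructor <;> rintro ⟨a, b, c⟩ <;> exact ⟨a, b, c.symm⟩) rfl rfl
    rw [hin, hout]
    by_cases hxr : x = r
    · subst hxr
      rw [if_neg (by rintro ⟨-, h⟩; exact h rfl), if_neg (by rintro ⟨-, h⟩; exact h rfl)]
      rw [hTr] at hTsplit
      rw [hUr] at hUsplit
      rw [if_pos hrT] at hTsplit
      rw [if_pos hrU] at hUsplit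
      have := hmaxsub (b x)
      linarith [hUzero, hTsplit, hUsplit]
    · by_cases hxT : x ∈ T <;> by_cases hxU : x ∈ U
      · rw [if_pos hxT] at hTsplit
        rw [if_pos hxU] at hUsplit
        rw [if_pos ⟨hxU, hxr⟩, if_pos ⟨hxT, hxr⟩]
        have := hmaxsub (b x)
        linarith
      · rw [if_pos hxT] at hTsplit
        rw [if_neg hxU] at hUsplit
        rw [if_neg (by rintro ⟨h, -⟩; exact hxU h), if_pos ⟨hxT, hxr⟩]
        have hb : 0 ≤ b x := by
          by_contra h; exact hxU (hUdem x (by linarith))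
        rw [max_eq_left hb] at hTsplit
        have h0 := hUzero hxU
        linarith
      · rw [if_neg hxT] at hTsplit
        rw [if_pos hxU] at hUsplit
        rw [if_pos ⟨hxU, hxr⟩, if_neg (by rintro ⟨h, -⟩; exact hxT h)]
        have hb : b x ≤ 0 := by
          by_contra h; exact hxT (hTsupp x (by linarith))
        rw [max_eq_left (by linarith : (0:ℝ) ≤ -b x)] at hUsplit
        have h0 := hTzero hxT
        linarith
      · rw [if_neg hxT] at hTsplit
        rw [if_neg hxU] at hUsplit
        rw [if_neg (by rintro ⟨h, -⟩; exact hxU h), if_neg (by rintro ⟨h, -⟩; exact hxT h)]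
        have hb1 : 0 ≤ b x := by
          by_contra h; exact hxU (hUdem x (by linarith))
        have hb2 : b x ≤ 0 := by
          by_contra h; exact hxT (hTsupp x (by linarith))
        have h0T := hTzero hxT
        have h0U := hUzero hxU
        linarith
end

section
/- Let V be a finite set, b : V → ℝ with ∑_{v ∈ V} b(v) = 0 and ∑_{v ∈ V} max(b(v), 0) = 1, and r ∈ V. Let T ⊆ V with r ∈ T contain every vertex with b(v) > 0 and carry an in-tree parent function p_T : T∖{r} → T rooted at r; let U ⊆ V with r ∈ U contain every vertex with b(v) < 0 and carry an out-tree parent function p_U : U∖{r} → U rooted at r. For v ∈ U let D(v) = ∑_{w descendant of v in U} max(−b(w), 0), and let D(v) = 0 for v ∉ U. Let v_1, …, v_n be an enumeration of T∖{r} in leaf-to-root order (every vertex appears before its parent in T). Define s_0 : V → ℝ by s_0(v) = max(b(v), 0), and for k = 1, …, n define s_k from s_{k−1} by: letting x = min(s_{k−1}(v_k), 1 − D(v_k)), set s_k(v_k) = s_{k−1}(v_k) − x, set s_k(p_T(v_k)) = s_{k−1}(p_T(v_k)) + x, and let s_k agree with s_{k−1} on all other vertices. Then for every x ∈ U and every k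 with 0 ≤ k ≤ n, the sum of s_k(v) over those v ∈ {v_1, …, v_k} that are descendants of x in U is at most D(x). -/
open Finset

theorem IsDesc.trans {V : Type*} {p : V → V} {r w y x : V}
    (hwy : IsDesc p r w y) (hyx : IsDesc p r y x) : IsDesc p r w x := by
  obtain ⟨a, rfl, ha⟩ := hwy
  obtain ⟨c, rfl, hc⟩ := hyx
  refine ⟨c + a, Function.iterate_add_apply .., fun j hj => ?_⟩
  rcases lt_or_ge j a with hja | hja
  · exact ha j hja
  · obtain ⟨i, rfl⟩ := Nat.exists_eq_add_of_le hja
    rw [add_comm, Function.iterate_add_apply]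
    exact hc i (by omega)

open Classical in
theorem sum_filter_isDesc_mono {V : Type*} [Fintype V] {p : V → V} {r : V} {U : Finset V}
    {w : V → ℝ} (hw : ∀ u, 0 ≤ w u) {x y : V} (hyx : IsDesc p r y x) :
    ∑ u ∈ univ.filter (fun u => u ∈ U ∧ IsDesc p r u y), w u ≤
      ∑ u ∈ univ.filter (fun u => u ∈ U ∧ IsDesc p r u x), w u :=
  sum_le_sum_of_subset_of_nonneg
    (monotone_filter_right _ fun _ _ hu => ⟨hu.1, hu.2.trans hyx⟩) fun u _ _ => hw u

theorem sum_max_neg_eq_of_sum_eq_zero {V : Type*} [Fintype V] {b : V → ℝ} (hb : ∑ u, b u = 0) :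
    ∑ u, max (-b u) 0 = ∑ u, max (b u) 0 := by
  have hpart : ∀ u, max (-b u) 0 = max (b u) 0 - b u := fun u => by
    rcases le_total (b u) 0 with h | h <;> simp [h]
  rw [sum_congr rfl fun u _ => hpart u, sum_sub_distrib, hb, sub_zero]

theorem Fin.filter_val_lt_succ_and {n k : ℕ} (hk : k < n) (p : Fin n → Prop) [DecidablePred p] :
    univ.filter (fun j : Fin n => (j : ℕ) < k + 1 ∧ p j) =
      if p ⟨k, hk⟩ then insert ⟨k, hk⟩ (univ.filter fun j : Fin n => (j : ℕ) < k ∧ p j)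
      else univ.filter fun j : Fin n => (j : ℕ) < k ∧ p j := by
  ext j
  by_cases hj : j = ⟨k, hk⟩
  · subst hj
    split_ifs with h <;> simp [h]
  · have hjk : (j : ℕ) < k + 1 ↔ (j : ℕ) < k := by
      have : (j : ℕ) ≠ k := fun h => hj (Fin.ext h)
      omega
    split_ifs <;> simp only [mem_insert, mem_filter, mem_univ, true_and, hj, false_or, hjk]

section Transfer

variable {V : Type*}

def IsTransfer (f g : V → ℝ) (a c : V) (m : ℝ) : Prop :=
  g a = f a - m ∧ g c = f c + m ∧ ∀ u, u ≠ a → u ≠ c → g u = f u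

variable {f g : V → ℝ} {a c : V} {m : ℝ}

theorem IsTransfer.sum_eq_of_notMem (h : IsTransfer f g a c m) {P : Finset V}
    (haP : a ∉ P) (hcP : c ∉ P) : ∑ u ∈ P, g u = ∑ u ∈ P, f u :=
  sum_congr rfl fun u hu => h.2.2 u (ne_of_mem_of_not_mem hu haP) (ne_of_mem_of_not_mem hu hcP)

theorem IsTransfer.sum_univ_eq [Fintype V] [DecidableEq V] (h : IsTransfer f g a c m)
    (hac : a ≠ c) : ∑ u, g u = ∑ u, f u := by
  have hP : a ∉ (univ.erase a).erase c ∧ c ∉ (univ.erase a).erase c := by simp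
  rw [← add_sum_erase _ _ (mem_univ a), ← add_sum_erase _ _ (mem_erase.2 ⟨hac.symm, mem_univ c⟩),
    ← add_sum_erase _ _ (mem_univ a), ← add_sum_erase _ _ (mem_erase.2 ⟨hac.symm, mem_univ c⟩),
    h.sum_eq_of_notMem hP.1 hP.2, h.1, h.2.1]
  ring

theorem IsTransfer.nonneg {κ : ℝ} (h : IsTransfer f g a c (min (f a) κ)) (hf : ∀ u, 0 ≤ f u)
    (hκ : 0 ≤ κ) (u : V) : 0 ≤ g u := by
  have hm : 0 ≤ min (f a) κ := le_min (hf a) hκ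
  by_cases hua : u = a
  · subst hua
    linarith [h.1, min_le_left (f u) κ]
  by_cases huc : u = c
  · subst huc
    linarith [h.2.1, hf u]
  rw [h.2.2 u hua huc]
  exact hf u

theorem IsTransfer.sum_insert_le [Fintype V] [DecidableEq V] {d B : ℝ} {P : Finset V}
    (h : IsTransfer f g a c (min (f a) (1 - d)))
    (hf : ∀ u, 0 ≤ f u) (htot : ∑ u, f u = 1) (haP : a ∉ P) (hcP : c ∉ P)
    (hP : ∑ u ∈ P, f u ≤ B) (hd : d ≤ B) : ∑ u ∈ insert a P, g u ≤ B := by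
  have hle : f a + ∑ u ∈ P, f u ≤ 1 := by
    rw [← sum_insert haP, ← htot]
    exact sum_le_univ_sum_of_nonneg hf
  rw [sum_insert haP, h.sum_eq_of_notMem haP hcP, h.1]
  rcases le_total (f a) (1 - d) with hcap | hcap
  · rw [min_eq_left hcap]
    linarith
  · rw [min_eq_right hcap]
    linarith

theorem nonneg_and_sum_eq_of_transfers [Fintype V] [DecidableEq V] {n : ℕ} {s : ℕ → V → ℝ}
    {a c : Fin n → V} {κ : Fin n → ℝ}
    (hstep : ∀ i : Fin n, IsTransfer (s i) (s (i + 1)) (a i) (c i) (min (s i (a i)) (κ i)))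
    (hac : ∀ i, a i ≠ c i) (hκ : ∀ i, 0 ≤ κ i) (hs0 : ∀ u, 0 ≤ s 0 u) :
    ∀ k ≤ n, (∀ u, 0 ≤ s k u) ∧ ∑ u, s k u = ∑ u, s 0 u := by
  intro k
  induction k with
  | zero => exact fun _ => ⟨hs0, rfl⟩
  | succ k ih =>
    intro hk
    obtain ⟨hnn, hsum⟩ := ih (by omega)
    have h := hstep ⟨k, hk⟩
    exact ⟨h.nonneg hnn (hκ _), (h.sum_univ_eq (hac _)).trans hsum⟩

theorem sum_filter_le_of_transfers [Fintype V] {n : ℕ} {s : ℕ → V → ℝ} {v c : Fin n → V}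
    {d : Fin n → ℝ} (hvinj : Function.Injective v) (horder : ∀ i j, c i = v j → i < j)
    (hstep : ∀ i : Fin n, IsTransfer (s i) (s (i + 1)) (v i) (c i) (min (s i (v i)) (1 - d i)))
    (hs : ∀ k ≤ n, (∀ u, 0 ≤ s k u) ∧ ∑ u, s k u = 1)
    (Q : V → Prop) [DecidablePred Q] {B : ℝ} (hB : 0 ≤ B) (hd : ∀ i, Q (v i) → d i ≤ B) :
    ∀ k ≤ n, ∑ i ∈ univ.filter (fun i : Fin n => (i : ℕ) < k ∧ Q (v i)), s k (v i) ≤ B := by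
  classical
  intro k
  induction k with
  | zero => intro _; simpa using hB
  | succ k ih =>
    intro hk
    set i : Fin n := ⟨k, hk⟩
    set I := univ.filter (fun j : Fin n => (j : ℕ) < k ∧ Q (v j))
    set e : Fin n ↪ V := ⟨v, hvinj⟩
    have hvi : v i ∉ I.map e := by simp [I, e, i]
    have hci : c i ∉ I.map e := by
      simp only [mem_map, mem_filter, I, e]
      rintro ⟨j, ⟨-, hjk, -⟩, hj⟩
      exact (horder i j hj.symm).not_ge (Fin.le_def.2 hjk.le)
    obtain ⟨hnn, htot⟩ := hs k (by omega)
    have hmap : ∀ (J : Finset (Fin n)) (f : V → ℝ), ∑ j ∈ J, f (v j) = ∑ u ∈ J.map e, f u :=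
      fun J f => (sum_map J e f).symm
    have ih' : ∑ u ∈ I.map e, s k u ≤ B := by
      rw [← hmap]
      exact ih (by omega)
    rw [Fin.filter_val_lt_succ_and hk]
    split_ifs with hQ
    · rw [hmap, map_insert]
      exact (hstep i).sum_insert_le hnn htot hvi hci ih' (hd i hQ)
    · rw [hmap, (hstep i).sum_eq_of_notMem hvi hci]
      exact ih'

end Transfer

open Classical in
theorem stmt_3_general {V : Type*} [Fintype V]
    (b : V → ℝ) (r : V) (U : Finset V) (pT pU : V → V)
    (n : ℕ) (v : Fin n → V) (D : V → ℝ) (s : ℕ → V → ℝ)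
    (hbsum : ∑ u, b u = 0)
    (hsupply : ∑ u, max (b u) 0 = 1)
    (hD : ∀ u, D u = if u ∈ U then
      ∑ w ∈ Finset.univ.filter (fun w => w ∈ U ∧ IsDesc pU r w u), max (-b w) 0
      else 0)
    (hvinj : Function.Injective v)
    (horder : ∀ i j : Fin n, pT (v i) = v j → i < j)
    (hs0 : ∀ u, s 0 u = max (b u) 0)
    (hstep : ∀ i : Fin n,
      s ((i : ℕ) + 1) (v i) = s i (v i) - min (s i (v i)) (1 - D (v i)) ∧
      s ((i : ℕ) + 1) (pT (v i)) = s i (pT (v i)) + min (s i (v i)) (1 - D (v i)) ∧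
      ∀ u, u ≠ v i → u ≠ pT (v i) → s ((i : ℕ) + 1) u = s i u) :
    ∀ x ∈ U, ∀ k ≤ n,
      ∑ i ∈ Finset.univ.filter
          (fun i : Fin n => (i : ℕ) < k ∧ v i ∈ U ∧ IsDesc pU r (v i) x),
        s k (v i) ≤ D x := by
  intro x hx k hk
  have hdem : ∀ u, 0 ≤ max (-b u) 0 := fun u => le_max_right _ _
  have hD_le_one : ∀ u, D u ≤ 1 := fun u => by
    rw [hD]
    split_ifs
    · calc _ ≤ ∑ u, max (-b u) 0 := sum_le_univ_sum_of_nonneg hdem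
        _ = 1 := (sum_max_neg_eq_of_sum_eq_zero hbsum).trans hsupply
    · exact zero_le_one
  have hsupp : ∀ m ≤ n, (∀ u, 0 ≤ s m u) ∧ ∑ u, s m u = 1 := fun m hm => by
    simpa only [hs0, hsupply] using nonneg_and_sum_eq_of_transfers hstep
      (fun i h => lt_irrefl i (horder i i h.symm)) (fun i => sub_nonneg.2 (hD_le_one _))
      (fun u => by rw [hs0]; exact le_max_right _ _) m hm
  refine sum_filter_le_of_transfers hvinj horder hstep hsupp
    (fun u => u ∈ U ∧ IsDesc pU r u x) ?_ ?_ k hk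
  · rw [hD, if_pos hx]
    exact sum_nonneg fun u _ => hdem u
  · rintro i ⟨hiU, hix⟩
    rw [hD, hD, if_pos hiU, if_pos hx]
    exact sum_filter_isDesc_mono hdem hix

open Classical in
/-- Invariant of Step 2′ of the modified Goldberg–Rao algorithm: for every
vertex `x` of the out-tree `U`, the total residual supply left on already
processed vertices that are descendants of `x` in `U` is at most `D x`. -/
theorem stmt_3 {V : Type*} [Fintype V]
    (b : V → ℝ) (r : V) (T U : Finset V) (pT pU : V → V)
    (n : ℕ) (v : Fin n → V) (D : V → ℝ) (s : ℕ → V → ℝ)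
    (hbsum : ∑ u, b u = 0)
    (hsupply : ∑ u, max (b u) 0 = 1)
    (hrT : r ∈ T) (hrU : r ∈ U)
    (hTsupp : ∀ u, 0 < b u → u ∈ T)
    (hUdem : ∀ u, b u < 0 → u ∈ U)
    (hpT : ∀ u ∈ T, u ≠ r → pT u ∈ T)
    (hpTroot : ∀ u ∈ T, ∃ k : ℕ, pT^[k] u = r)
    (hpU : ∀ u ∈ U, u ≠ r → pU u ∈ U)
    (hpUroot : ∀ u ∈ U, ∃ k : ℕ, pU^[k] u = r)
    (hD : ∀ u, D u = if u ∈ U then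
      ∑ w ∈ Finset.univ.filter (fun w => w ∈ U ∧ IsDesc pU r w u), max (-b w) 0
      else 0)
    (hvinj : Function.Injective v)
    (hvmem : ∀ i, v i ∈ T ∧ v i ≠ r)
    (hvsurj : ∀ u ∈ T, u ≠ r → ∃ i, v i = u)
    (horder : ∀ i j : Fin n, pT (v i) = v j → i < j)
    (hs0 : ∀ u, s 0 u = max (b u) 0)
    (hstep : ∀ i : Fin n,
      s ((i : ℕ) + 1) (v i) = s i (v i) - min (s i (v i)) (1 - D (v i)) ∧
      s ((i : ℕ) + 1) (pT (v i)) = s i (pT (v i)) + min (s i (v i)) (1 - D (v i)) ∧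
      ∀ u, u ≠ v i → u ≠ pT (v i) → s ((i : ℕ) + 1) u = s i u) :
    ∀ x ∈ U, ∀ k ≤ n,
      ∑ i ∈ Finset.univ.filter
          (fun i : Fin n => (i : ℕ) < k ∧ v i ∈ U ∧ IsDesc pU r (v i) x),
        s k (v i) ≤ D x :=
  stmt_3_general b r U pT pU n v D s hbsum hsupply hD hvinj horder hs0 hstep
end

section
/- Let V be a finite set, b : V → ℝ with ∑_{v ∈ V} b(v) = 0 and ∑_{v ∈ V} max(b(v), 0) = 1, and r ∈ V. Let T ⊆ V with r ∈ T contain every vertex with b(v) > 0 and carry an in-tree parent function p_T rooted at r; let U ⊆ V with r ∈ U contain every vertex with b(v) < 0 and carry an out-tree parent function p_U rooted at r. For v ∈ U let D(v) = ∑_{w descendant of v in U} max(−b(w), 0), and D(v) = 0 for v ∉ U. Let v_1, …, v_n enumerate T∖{r} in leaf-to-root order, let s_0(v) = max(b(v), 0), and for k = 1, …, n obtain s_k from s_{k−1} by transferring x = min(s_{k−1}(v_k), 1 − D(v_k)) from v_k to p_T(v_k). Then for every w ∈ U∖{r}, the net demand D(w) − ∑_{v descendant of w in U} s_n(v) is nonnegative,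 where s_n is extended by 0 on vertices outside T. -/
open Classical in
/-- Corollary of the Step 2′ invariant: when a vertex `w` is processed in
Step 3′ of the modified Goldberg–Rao algorithm, its net demand
`D w - ∑_{u descendant of w in U} s_n u` is nonnegative (with `s_n` extended
by `0` outside `T`). -/
theorem stmt_4 {V : Type*} [Fintype V]
    (b : V → ℝ) (r : V) (T U : Finset V) (pT pU : V → V)
    (n : ℕ) (v : Fin n → V) (D : V → ℝ) (s : ℕ → V → ℝ)
    (hbsum : ∑ u, b u = 0)
    (hsupply : ∑ u, max (b u) 0 = 1)
    (hrT : r ∈ T) (hrU : r ∈ U)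
    (hTsupp : ∀ u, 0 < b u → u ∈ T)
    (hUdem : ∀ u, b u < 0 → u ∈ U)
    (hpT : ∀ u ∈ T, u ≠ r → pT u ∈ T)
    (hpTroot : ∀ u ∈ T, ∃ k : ℕ, pT^[k] u = r)
    (hpU : ∀ u ∈ U, u ≠ r → pU u ∈ U)
    (hpUroot : ∀ u ∈ U, ∃ k : ℕ, pU^[k] u = r)
    (hD : ∀ u, D u = if u ∈ U then
      ∑ w ∈ Finset.univ.filter (fun w => w ∈ U ∧ IsDesc pU r w u), max (-b w) 0
      else 0)
    (hvinj : Function.Injective v)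
    (hvmem : ∀ i, v i ∈ T ∧ v i ≠ r)
    (hvsurj : ∀ u ∈ T, u ≠ r → ∃ i, v i = u)
    (horder : ∀ i j : Fin n, pT (v i) = v j → i < j)
    (hs0 : ∀ u, s 0 u = max (b u) 0)
    (hstep : ∀ i : Fin n,
      s ((i : ℕ) + 1) (v i) = s i (v i) - min (s i (v i)) (1 - D (v i)) ∧
      s ((i : ℕ) + 1) (pT (v i)) = s i (pT (v i)) + min (s i (v i)) (1 - D (v i)) ∧
      ∀ u, u ≠ v i → u ≠ pT (v i) → s ((i : ℕ) + 1) u = s i u) :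
    ∀ w ∈ U, w ≠ r →
      0 ≤ D w - ∑ u ∈ Finset.univ.filter (fun u => u ∈ U ∧ IsDesc pU r u w),
        (if u ∈ T then s n u else 0) := by
  classical
  -- basic identity
  have hmaxneg : ∀ x : ℝ, max (-x) 0 = max x 0 - x := by
    intro x; rcases le_total x 0 with h | h
    · rw [max_eq_left (neg_nonneg.mpr h), max_eq_right h]; ring
    · rw [max_eq_right (neg_nonpos.mpr h), max_eq_left h]; ring
  have hDnn : ∀ u, 0 ≤ D u := by
    intro u; rw [hD]; split
    · exact Finset.sum_nonneg fun w _ => le_max_right _ _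
    · exact le_refl 0
  have hdemsum : ∑ u, max (-b u) 0 = 1 := by
    simp only [hmaxneg]
    rw [Finset.sum_sub_distrib, hsupply, hbsum, sub_zero]
  have hDle : ∀ u, D u ≤ 1 := by
    intro u; rw [hD]; split
    · rw [← hdemsum]
      exact Finset.sum_le_sum_of_subset_of_nonneg (Finset.filter_subset _ _)
        (fun w _ _ => le_max_right _ _)
    · exact zero_le_one
  -- nonnegativity invariant
  have hnn : ∀ k, k ≤ n → ∀ u, 0 ≤ s k u := by
    intro k
    induction k with
    | zero => intro _ u; rw [hs0]; exact le_max_right _ _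
    | succ k ih =>
      intro hk u
      have hk' : k < n := hk
      have h1 : s (k + 1) (v ⟨k, hk'⟩) = s k (v ⟨k, hk'⟩)
          - min (s k (v ⟨k, hk'⟩)) (1 - D (v ⟨k, hk'⟩)) := (hstep ⟨k, hk'⟩).1
      have h2 : s (k + 1) (pT (v ⟨k, hk'⟩)) = s k (pT (v ⟨k, hk'⟩))
          + min (s k (v ⟨k, hk'⟩)) (1 - D (v ⟨k, hk'⟩)) := (hstep ⟨k, hk'⟩).2.1
      have h3 : ∀ u, u ≠ v ⟨k, hk'⟩ → u ≠ pT (v ⟨k, hk'⟩) → s (k + 1) u = s k u :=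
        (hstep ⟨k, hk'⟩).2.2
      have hminnn : 0 ≤ min (s k (v ⟨k, hk'⟩)) (1 - D (v ⟨k, hk'⟩)) :=
        le_min (ih (le_of_lt hk') _) (by linarith [hDle (v ⟨k, hk'⟩)])
      by_cases hu1 : u = v ⟨k, hk'⟩
      · subst hu1; rw [h1]
        have := min_le_left (s k (v ⟨k, hk'⟩)) (1 - D (v ⟨k, hk'⟩)); linarith
      · by_cases hu2 : u = pT (v ⟨k, hk'⟩)
        · subst hu2; rw [h2]
          have := ih (le_of_lt hk') (pT (v ⟨k, hk'⟩)); linarith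
        · rw [h3 u hu1 hu2]; exact ih (le_of_lt hk') u
  -- sum invariant
  have hsum : ∀ k, k ≤ n → ∑ u, s k u = 1 := by
    intro k
    induction k with
    | zero => intro _; simp only [hs0]; exact hsupply
    | succ k ih =>
      intro hk
      have hk' : k < n := hk
      have h1 : s (k + 1) (v ⟨k, hk'⟩) = s k (v ⟨k, hk'⟩)
          - min (s k (v ⟨k, hk'⟩)) (1 - D (v ⟨k, hk'⟩)) := (hstep ⟨k, hk'⟩).1
      have h2 : s (k + 1) (pT (v ⟨k, hk'⟩)) = s k (pT (v ⟨k, hk'⟩))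
          + min (s k (v ⟨k, hk'⟩)) (1 - D (v ⟨k, hk'⟩)) := (hstep ⟨k, hk'⟩).2.1
      have h3 : ∀ u, u ≠ v ⟨k, hk'⟩ → u ≠ pT (v ⟨k, hk'⟩) → s (k + 1) u = s k u :=
        (hstep ⟨k, hk'⟩).2.2
      have hne : v ⟨k, hk'⟩ ≠ pT (v ⟨k, hk'⟩) := by
        intro h
        exact absurd (horder ⟨k, hk'⟩ ⟨k, hk'⟩ h.symm) (lt_irrefl _)
      have key : ∀ u, s (k + 1) u
          = s k u + ((if u = v ⟨k, hk'⟩ then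
              -(min (s k (v ⟨k, hk'⟩)) (1 - D (v ⟨k, hk'⟩))) else 0)
            + (if u = pT (v ⟨k, hk'⟩) then
              min (s k (v ⟨k, hk'⟩)) (1 - D (v ⟨k, hk'⟩)) else 0)) := by
        intro u
        by_cases hu1 : u = v ⟨k, hk'⟩
        · subst hu1; rw [if_pos rfl, if_neg hne, h1]; ring
        · by_cases hu2 : u = pT (v ⟨k, hk'⟩)
          · subst hu2; rw [if_neg hu1, if_pos rfl, h2]; ring
          · rw [if_neg hu1, if_neg hu2, h3 u hu1 hu2]; ring
      rw [Finset.sum_congr rfl (fun u _ => key u)]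
      rw [Finset.sum_add_distrib, Finset.sum_add_distrib,
        Finset.sum_ite_eq' Finset.univ (v ⟨k, hk'⟩),
        Finset.sum_ite_eq' Finset.univ (pT (v ⟨k, hk'⟩)),
        if_pos (Finset.mem_univ _), if_pos (Finset.mem_univ _), ih (le_of_lt hk')]
      ring
  -- freezing
  have hfreeze : ∀ (i : Fin n) (m : ℕ), (i : ℕ) + 1 ≤ m → m ≤ n →
      s m (v i) = s ((i : ℕ) + 1) (v i) := by
    intro i m hm
    induction m, hm using Nat.le_induction with
    | base => intro _; rfl
    | succ m hm ih =>
      intro hmn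
      have hm' : m < n := hmn
      have h3 : ∀ u, u ≠ v ⟨m, hm'⟩ → u ≠ pT (v ⟨m, hm'⟩) → s (m + 1) u = s m u :=
        (hstep ⟨m, hm'⟩).2.2
      have hne1 : v i ≠ v ⟨m, hm'⟩ := by
        intro h
        have h' : (i : ℕ) = m := congrArg Fin.val (hvinj h)
        omega
      have hne2 : v i ≠ pT (v ⟨m, hm'⟩) := by
        intro h
        have h' : (⟨m, hm'⟩ : Fin n) < i := horder ⟨m, hm'⟩ i h.symm
        have h'' : m < (i : ℕ) := h'
        omega
      rw [h3 (v i) hne1 hne2, ih (by omega)]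
  have hsn : ∀ i : Fin n, s n (v i)
      = s (i : ℕ) (v i) - min (s (i : ℕ) (v i)) (1 - D (v i)) := by
    intro i
    rw [hfreeze i n (Nat.succ_le_of_lt i.isLt) le_rfl]
    exact (hstep i).1
  -- descendant facts
  have htrans : ∀ x u y, IsDesc pU r x u → IsDesc pU r u y → IsDesc pU r x y := by
    rintro x u y ⟨k1, hk1, hj1⟩ ⟨k2, hk2, hj2⟩
    refine ⟨k2 + k1, ?_, ?_⟩
    · rw [Function.iterate_add_apply, hk1, hk2]
    · intro j hj
      rcases Nat.lt_or_ge j k1 with h | h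
      · exact hj1 j h
      · obtain ⟨j', rfl⟩ : ∃ j', j = j' + k1 := ⟨j - k1, by omega⟩
        rw [Function.iterate_add_apply, hk1]
        exact hj2 j' (by omega)
  have hrnotdesc : ∀ y, y ≠ r → ¬ IsDesc pU r r y := by
    rintro y hy ⟨k, hk, hj⟩
    cases k with
    | zero => exact hy hk.symm
    | succ k => exact hj 0 (Nat.succ_pos k) rfl
  have hDmono : ∀ u y, u ∈ U → y ∈ U → IsDesc pU r u y → D u ≤ D y := by
    intro u y hu hy hd
    rw [hD u, hD y, if_pos hu, if_pos hy]
    apply Finset.sum_le_sum_of_subset_of_nonneg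
    · intro x hx
      rw [Finset.mem_filter] at hx ⊢
      exact ⟨hx.1, hx.2.1, htrans x u y hx.2.2 hd⟩
    · intro _ _ _; exact le_max_right _ _
  -- main
  intro w hwU hwr
  rw [sub_nonneg]
  have key : ∀ F : Finset V, (∀ u ∈ F, u ∈ U ∧ IsDesc pU r u w) →
      ∑ u ∈ F, (if u ∈ T then s n u else 0) ≤ D w := by
    intro F hF
    have hrF : r ∉ F := fun hr => hrnotdesc w hwr (hF r hr).2
    by_cases hex : ∃ i : Fin n, v i ∈ F ∧ 0 < s n (v i)
    · set I := Finset.univ.filter (fun i : Fin n => v i ∈ F ∧ 0 < s n (v i)) with hI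
      have hIne : I.Nonempty := by
        obtain ⟨i, h⟩ := hex
        exact ⟨i, Finset.mem_filter.mpr ⟨Finset.mem_univ _, h⟩⟩
      set i₀ := I.max' hIne with hi0
      obtain ⟨hi0F, hi0pos⟩ := (Finset.mem_filter.mp (I.max'_mem hIne)).2
      have hk₀n : (i₀ : ℕ) ≤ n := le_of_lt i₀.isLt
      have hA : s n (v i₀) = s (i₀ : ℕ) (v i₀) - (1 - D (v i₀)) := by
        have h := hsn i₀
        rcases le_total (s (i₀ : ℕ) (v i₀)) (1 - D (v i₀)) with hle | hle
        · rw [min_eq_left hle] at h; rw [h] at hi0pos; linarith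
        · rw [min_eq_right hle] at h; exact h
      have hB : ∀ u ∈ F.erase (v i₀), (if u ∈ T then s n u else 0) ≤ s (i₀ : ℕ) u := by
        intro u hu
        obtain ⟨hne, huF⟩ := Finset.mem_erase.mp hu
        by_cases huT : u ∈ T
        · rw [if_pos huT]
          rcases le_or_gt (s n u) 0 with h0 | h0
          · exact le_trans h0 (hnn _ hk₀n u)
          · have hur : u ≠ r := fun hh => hrF (hh ▸ huF)
            obtain ⟨j, hj⟩ := hvsurj u huT hur
            subst hj
            have hjI : j ∈ I := Finset.mem_filter.mpr ⟨Finset.mem_univ _, huF, h0⟩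
            have hjle : j ≤ i₀ := Finset.le_max' I j hjI
            have hjne : j ≠ i₀ := fun h => hne (by rw [h])
            have hjlt' : j < i₀ := lt_of_le_of_ne hjle hjne
            have hjlt : (j : ℕ) < (i₀ : ℕ) := hjlt'
            rw [hfreeze j n (by omega) le_rfl, ← hfreeze j (i₀ : ℕ) (by omega) hk₀n]
        · rw [if_neg huT]; exact hnn _ hk₀n u
      have hsplit : ∑ u ∈ F, (if u ∈ T then s n u else 0)
          = (if v i₀ ∈ T then s n (v i₀) else 0)
            + ∑ u ∈ F.erase (v i₀), (if u ∈ T then s n u else 0) :=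
        (Finset.add_sum_erase F _ hi0F).symm
      have h2 : ∑ u ∈ F.erase (v i₀), (if u ∈ T then s n u else 0)
          ≤ 1 - s (i₀ : ℕ) (v i₀) := by
        calc ∑ u ∈ F.erase (v i₀), (if u ∈ T then s n u else 0)
            ≤ ∑ u ∈ F.erase (v i₀), s (i₀ : ℕ) u := Finset.sum_le_sum hB
          _ ≤ ∑ u ∈ Finset.univ.erase (v i₀), s (i₀ : ℕ) u :=
              Finset.sum_le_sum_of_subset_of_nonneg
                (Finset.erase_subset_erase _ (Finset.subset_univ F))
                (fun u _ _ => hnn _ hk₀n u)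
          _ = 1 - s (i₀ : ℕ) (v i₀) := by
              rw [Finset.sum_erase_eq_sub (Finset.mem_univ _), hsum _ hk₀n]
      have hDm : D (v i₀) ≤ D w :=
        hDmono (v i₀) w (hF _ hi0F).1 hwU (hF _ hi0F).2
      rw [hsplit, if_pos (hvmem i₀).1, hA]
      linarith
    · have hzero : ∀ u ∈ F, (if u ∈ T then s n u else 0) = 0 := by
        intro u huF
        by_cases huT : u ∈ T
        · rw [if_pos huT]
          by_contra h
          have hur : u ≠ r := fun hh => hrF (hh ▸ huF)
          obtain ⟨j, hj⟩ := hvsurj u huT hur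
          have h0 : 0 < s n u := lt_of_le_of_ne (hnn n le_rfl u) (Ne.symm h)
          exact hex ⟨j, by rw [hj]; exact huF, by rw [hj]; exact h0⟩
        · rw [if_neg huT]
      rw [Finset.sum_eq_zero hzero]
      exact hDnn w
  exact key _ (fun u hu => (Finset.mem_filter.mp hu).2)
end

section
/- Let V be a finite set, b : V → ℝ with ∑_{v ∈ V} b(v) = 0 and ∑_{v ∈ V} max(b(v), 0) = 1, and r ∈ V. Let T ⊆ V with r ∈ T contain every vertex with b(v) > 0 and carry an in-tree parent function p_T rooted at r; let U ⊆ V with r ∈ U contain every vertex with b(v) < 0 and carry an out-tree parent function p_U rooted at r. Let v_1, …, v_n enumerate T∖{r} in leaf-to-root order, let D(v) = ∑_{w descendant of v in U} max(−b(w), 0) for v ∈ U and D(v) = 0 otherwise, let s_0(v) = max(b(v), 0), and for k = 1, …, n obtain s_k from s_{k−1} by transferring a(v_k) := min(s_{k−1}(v_k), 1 − D(v_k)) from v_k to p_T(v_k). Then for every pair of vertices (v, w) with v ∈ T∖{r}, w = p_T(v), w ∈ U∖{r}, and v = p_U(w), one has a(v) + (D(w) − ∑_{u descendant of w in U} s_n(u))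 ≤ 1, i.e., the total flow placed on an arc lying in both trees by Steps 2′ and 3′ of the modified algorithm is at most 1. -/
open Classical in
/-- On an arc lying in both the in-tree `T` and the out-tree `U`, the total
flow placed by Steps 2′ and 3′ of the modified Goldberg–Rao algorithm — the
amount `a x = min (s x) (1 - D x)` forwarded in Step 2′ plus the net demand
`D y - ∑_{u descendant of y in U} s_n u` routed in Step 3′ — is at most `1`. -/
theorem stmt_5 {V : Type*} [Fintype V]
    (b : V → ℝ) (r : V) (T U : Finset V) (pT pU : V → V)
    (n : ℕ) (v : Fin n → V) (D : V → ℝ) (s : ℕ → V → ℝ) (a : V → ℝ)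
    (hbsum : ∑ u, b u = 0)
    (hsupply : ∑ u, max (b u) 0 = 1)
    (hrT : r ∈ T) (hrU : r ∈ U)
    (hTsupp : ∀ u, 0 < b u → u ∈ T)
    (hUdem : ∀ u, b u < 0 → u ∈ U)
    (hpT : ∀ u ∈ T, u ≠ r → pT u ∈ T)
    (hpTroot : ∀ u ∈ T, ∃ k : ℕ, pT^[k] u = r)
    (hpU : ∀ u ∈ U, u ≠ r → pU u ∈ U)
    (hpUroot : ∀ u ∈ U, ∃ k : ℕ, pU^[k] u = r)
    (hD : ∀ u, D u = if u ∈ U then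
      ∑ w ∈ Finset.univ.filter (fun w => w ∈ U ∧ IsDesc pU r w u), max (-b w) 0
      else 0)
    (hvinj : Function.Injective v)
    (hvmem : ∀ i, v i ∈ T ∧ v i ≠ r)
    (hvsurj : ∀ u ∈ T, u ≠ r → ∃ i, v i = u)
    (horder : ∀ i j : Fin n, pT (v i) = v j → i < j)
    (hs0 : ∀ u, s 0 u = max (b u) 0)
    (hstep : ∀ i : Fin n,
      s ((i : ℕ) + 1) (v i) = s i (v i) - min (s i (v i)) (1 - D (v i)) ∧
      s ((i : ℕ) + 1) (pT (v i)) = s i (pT (v i)) + min (s i (v i)) (1 - D (v i)) ∧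
      ∀ u, u ≠ v i → u ≠ pT (v i) → s ((i : ℕ) + 1) u = s i u)
    (ha : ∀ i : Fin n, a (v i) = min (s i (v i)) (1 - D (v i))) :
    ∀ x y : V, x ∈ T → x ≠ r → y = pT x → y ∈ U → y ≠ r → x = pU y →
      a x + (D y - ∑ u ∈ Finset.univ.filter (fun u => u ∈ U ∧ IsDesc pU r u y),
        (if u ∈ T then s n u else 0)) ≤ 1 := by
  classical
  intro x y hxT hxr hyx hyU hyr hxy
  have hmax : ∀ u : V, max (-b u) 0 = max (b u) 0 - b u := by
    intro u
    simp only [max_def]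
    split_ifs <;> linarith
  have hdem : ∑ u, max (-b u) 0 = 1 := by
    simp only [hmax]
    rw [Finset.sum_sub_distrib, hbsum, hsupply]; ring
  have hD1 : ∀ u : V, D u ≤ 1 := by
    intro u
    rw [hD u]
    split_ifs with h
    · calc ∑ w ∈ Finset.univ.filter (fun w => w ∈ U ∧ IsDesc pU r w u), max (-b w) 0
          ≤ ∑ w, max (-b w) 0 :=
            Finset.sum_le_sum_of_subset_of_nonneg (Finset.filter_subset _ _)
              (fun w _ _ => le_max_right _ _)
        _ = 1 := hdem
    · norm_num
  have hnn : ∀ k, k ≤ n → ∀ u, 0 ≤ s k u := by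
    intro k
    induction k with
    | zero => intro _ u; rw [hs0]; exact le_max_right _ _
    | succ k ih =>
      intro hk u
      have hk' : k < n := hk
      have ihk := ih (le_of_lt hk')
      obtain ⟨h1, h2, h3⟩ := hstep ⟨k, hk'⟩
      simp only [Fin.val_mk] at h1 h2 h3
      have hmin : 0 ≤ min (s k (v ⟨k, hk'⟩)) (1 - D (v ⟨k, hk'⟩)) := by
        have := ihk (v ⟨k, hk'⟩)
        have := hD1 (v ⟨k, hk'⟩)
        exact le_min ‹0 ≤ s k (v ⟨k, hk'⟩)› (by linarith)
      by_cases hu : u = v ⟨k, hk'⟩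
      · subst hu
        rw [h1]
        have := min_le_left (s k (v ⟨k, hk'⟩)) (1 - D (v ⟨k, hk'⟩))
        linarith
      · by_cases hu2 : u = pT (v ⟨k, hk'⟩)
        · subst hu2
          rw [h2]
          have := ihk (pT (v ⟨k, hk'⟩))
          linarith
        · rw [h3 u hu hu2]; exact ihk u
  have hxU : x ∈ U := by rw [hxy]; exact hpU y hyU hyr
  have hDyx : D y ≤ D x := by
    rw [hD x, hD y, if_pos hyU, if_pos hxU]
    apply Finset.sum_le_sum_of_subset_of_nonneg
    · intro w hw
      simp only [Finset.mem_filter, Finset.mem_univ, true_and] at hw ⊢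
      obtain ⟨hwU, k, hk1, hk2⟩ := hw
      refine ⟨hwU, k + 1, ?_, ?_⟩
      · rw [Function.iterate_succ_apply', hk1, ← hxy]
      · intro j hj
        rcases lt_or_eq_of_le (Nat.lt_succ_iff.mp hj) with h | h
        · exact hk2 j h
        · rw [h, hk1]; exact hyr
    · intro w _ _; exact le_max_right _ _
  have hS : 0 ≤ ∑ u ∈ Finset.univ.filter (fun u => u ∈ U ∧ IsDesc pU r u y),
      (if u ∈ T then s n u else 0) :=
    Finset.sum_nonneg fun u _ => by
      split_ifs
      exacts [hnn n le_rfl u, le_rfl]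
  have hax : a x ≤ 1 - D x := by
    obtain ⟨i, hvi⟩ := hvsurj x hxT hxr
    rw [← hvi, ha i, hvi]
    exact min_le_right _ _
  linarith
end
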